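/- Let (Y_t)_{t≥0} be a nonnegative real-valued stochastic process adapted to a filtration (F_t), and suppose there exist constants C, b, ε > 0 such that (a) Y_{t+1} - Y_t ≤ b almost surely for all t, and (b) E[(Y_{t+1} - Y_t)·1_{Y_{t+1}-Y_t ≥ -b} | F_t] ≤ -ε on the event {Y_t ≥ C}. Then for h > 0 small enough that h < 1/b and h b^2 < ε/2, setting γ = 1 - hε/2, one has E[e^{h Y_{t+1}} | F_t] ≤ γ e^{h Y_t} on {Y_t ≥ C} and E[e^{h Y_{t+1}} | F_t] ≤ e^{h(Y_t + b)} on {Y_t < C}. -/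

import Mathlib

/-!
Write `Δ = Y (t+1) - Y t` and let `g = Δ · 1_{Δ ≥ -b}` be its truncation. Since `Δ ≤ b` and
`h b ≤ 1`, the quadratic bound `exp x ≤ 1 + x + x²` for `|x| ≤ 1` gives pointwise
`exp (h Δ) ≤ 1 + (h b)² + h g` (on `{Δ < -b}` simply `exp (h Δ) ≤ 1`). Conditioning turns
this into `E[exp (h Δ) | ℱ t] ≤ 1 + h² b² - h ε ≤ 1 - h ε / 2` on `{Y t ≥ C}`, while
`exp (h Δ) ≤ exp (h b)` everywhere. Pulling the `ℱ t`-measurable factor `exp (h Y t)` out of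
`E[exp (h Y (t+1)) | ℱ t]` finishes both bounds.
-/

open MeasureTheory Filter

lemma Real.exp_mul_le_one_add_sq_add_mul_truncation {h b d : ℝ} (hh : 0 ≤ h) (hhb : h * b ≤ 1)
    (hd : d ≤ b) :
    Real.exp (h * d) ≤ 1 + (h * b) ^ 2 + h * (d * if -b ≤ d then 1 else 0) := by
  split_ifs with hbd
  · have hsq : (h * d) ^ 2 ≤ (h * b) ^ 2 :=
      sq_le_sq' (by nlinarith) (mul_le_mul_of_nonneg_left hd hh)
    have hquad := (abs_le.mp (Real.abs_exp_sub_one_sub_id_le (x := h * d)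
      (abs_le.mpr ⟨by nlinarith, by nlinarith⟩))).2
    linarith
  · have hexp : Real.exp (h * d) ≤ 1 :=
      Real.exp_le_one_iff.mpr (mul_nonpos_of_nonneg_of_nonpos hh (by linarith))
    nlinarith [sq_nonneg (h * b)]

namespace MeasureTheory

variable {Ω : Type*} {m m0 : MeasurableSpace Ω} {μ : Measure Ω}

lemma condExp_le_add_mul_condExp [IsFiniteMeasure μ] (hm : m ≤ m0) {f g : Ω → ℝ} {c a : ℝ}
    (hf : Integrable f μ) (hg : Integrable g μ) (hfg : ∀ᵐ ω ∂μ, f ω ≤ c + a * g ω) :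
    ∀ᵐ ω ∂μ, μ[f|m] ω ≤ c + a * μ[g|m] ω := by
  have hmono := condExp_mono (m := m) hf ((integrable_const c).add (hg.const_mul a)) hfg
  have hadd := condExp_add (m := m) (integrable_const c) (hg.const_mul a)
  filter_upwards [hmono, hadd, condExp_smul (m := m) (μ := μ) a g] with ω hω hω_add hω_smul
  have hsmul : μ[fun ω => a * g ω|m] ω = a * μ[g|m] ω := hω_smul
  rwa [hω_add, Pi.add_apply, condExp_const hm, hsmul] at hω

lemma condExp_le_of_le_const [IsFiniteMeasure μ] (hm : m ≤ m0) {f : Ω → ℝ} {c : ℝ}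
    (hf : Integrable f μ) (hfc : ∀ᵐ ω ∂μ, f ω ≤ c) : ∀ᵐ ω ∂μ, μ[f|m] ω ≤ c := by
  filter_upwards [condExp_mono (m := m) hf (integrable_const c) hfc] with ω hω
  rwa [condExp_const hm] at hω

/-- Pull-out inequality without an integrability assumption on the product: when `f * g`
is not integrable its conditional expectation is `0`. -/
lemma condExp_mul_le_mul_condExp_of_nonneg {f g : Ω → ℝ} (hf : StronglyMeasurable[m] f)
    (hf0 : 0 ≤ f) (hg : Integrable g μ) (hg0 : 0 ≤ᵐ[μ] g) : μ[f * g|m] ≤ᵐ[μ] f * μ[g|m] := by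
  by_cases hfg : Integrable (f * g) μ
  · exact (condExp_mul_of_stronglyMeasurable_left hf hfg hg).le
  · rw [condExp_of_not_integrable hfg]
    filter_upwards [condExp_nonneg (m := m) hg0] with ω hω
    exact mul_nonneg (hf0 ω) hω

variable [IsFiniteMeasure μ] {Δ : Ω → ℝ} {b h : ℝ}

lemma integrable_truncation_of_ae_le (hΔ : Measurable Δ) (hΔb : ∀ᵐ ω ∂μ, Δ ω ≤ b) :
    Integrable (fun ω => Δ ω * if -b ≤ Δ ω then 1 else 0) μ := by
  refine Integrable.of_bound
    (hΔ.mul (Measurable.ite (measurableSet_le measurable_const hΔ) measurable_const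
      measurable_const)).aestronglyMeasurable |b| ?_
  filter_upwards [hΔb] with ω hω
  split_ifs with hbΔ
  · rw [mul_one, Real.norm_eq_abs, abs_le]
    exact ⟨by linarith [le_abs_self b], hω.trans (le_abs_self b)⟩
  · simp

lemma integrable_exp_mul_of_ae_le (hΔ : Measurable Δ) (hh : 0 ≤ h) (hΔb : ∀ᵐ ω ∂μ, Δ ω ≤ b) :
    Integrable (fun ω => Real.exp (h * Δ ω)) μ := by
  refine Integrable.of_bound (by fun_prop) (Real.exp (h * b)) ?_
  filter_upwards [hΔb] with ω hω
  rw [Real.norm_of_nonneg (Real.exp_pos _).le]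
  exact Real.exp_le_exp.mpr (mul_le_mul_of_nonneg_left hω hh)

lemma condExp_exp_mul_le_one_add_sq_add_mul_condExp_truncation (hm : m ≤ m0)
    (hΔ : Measurable Δ) (hh : 0 ≤ h) (hhb : h * b ≤ 1) (hΔb : ∀ᵐ ω ∂μ, Δ ω ≤ b) :
    ∀ᵐ ω ∂μ, μ[fun ω => Real.exp (h * Δ ω)|m] ω ≤
      1 + (h * b) ^ 2 + h * μ[fun ω => Δ ω * if -b ≤ Δ ω then 1 else 0|m] ω :=
  condExp_le_add_mul_condExp hm (integrable_exp_mul_of_ae_le hΔ hh hΔb)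
    (integrable_truncation_of_ae_le hΔ hΔb) (hΔb.mono fun _ hω =>
      Real.exp_mul_le_one_add_sq_add_mul_truncation hh hhb hω)

lemma condExp_exp_mul_le_exp_mul (hm : m ≤ m0) (hΔ : Measurable Δ) (hh : 0 ≤ h)
    (hΔb : ∀ᵐ ω ∂μ, Δ ω ≤ b) :
    ∀ᵐ ω ∂μ, μ[fun ω => Real.exp (h * Δ ω)|m] ω ≤ Real.exp (h * b) :=
  condExp_le_of_le_const hm (integrable_exp_mul_of_ae_le hΔ hh hΔb)
    (hΔb.mono fun _ hω => Real.exp_le_exp.mpr (mul_le_mul_of_nonneg_left hω hh))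

end MeasureTheory

theorem exp_drift_bound_general {Ω : Type*} {m0 : MeasurableSpace Ω} {μ : Measure Ω}
    [IsProbabilityMeasure μ] (ℱ : Filtration ℕ m0) (Y : ℕ → Ω → ℝ)
    (hadapt : Adapted ℱ Y)
    (C b ε : ℝ) (hb : 0 < b)
    (hbdd : ∀ t, ∀ᵐ ω ∂μ, Y (t + 1) ω - Y t ω ≤ b)
    (hdrift : ∀ t, ∀ᵐ ω ∂μ, C ≤ Y t ω →
      (μ[fun ω' => (Y (t + 1) ω' - Y t ω') *
          (if -b ≤ Y (t + 1) ω' - Y t ω' then 1 else 0) | ℱ t]) ω ≤ -ε)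
    (h : ℝ) (hh0 : 0 < h) (hh1 : h < 1 / b) (hh2 : h * b ^ 2 < ε / 2) :
    ∀ t, ∀ᵐ ω ∂μ,
      (C ≤ Y t ω →
        (μ[fun ω' => Real.exp (h * Y (t + 1) ω') | ℱ t]) ω ≤
          (1 - h * ε / 2) * Real.exp (h * Y t ω)) ∧
      (Y t ω < C →
        (μ[fun ω' => Real.exp (h * Y (t + 1) ω') | ℱ t]) ω ≤
          Real.exp (h * (Y t ω + b))) := by
  intro t
  have hhb : h * b ≤ 1 := ((lt_div_iff₀ hb).mp hh1).le
  have hYt : Measurable[ℱ t] (Y t) := hadapt t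
  have hΔ : Measurable fun ω => Y (t + 1) ω - Y t ω :=
    ((hadapt (t + 1)).mono (ℱ.le _) le_rfl).sub (hYt.mono (ℱ.le t) le_rfl)
  have hsplit : (fun ω => Real.exp (h * Y (t + 1) ω)) =
      (fun ω => Real.exp (h * Y t ω)) * fun ω => Real.exp (h * (Y (t + 1) ω - Y t ω)) := by
    ext ω; simp only [Pi.mul_apply, ← Real.exp_add]; ring_nf
  have hpull := condExp_mul_le_mul_condExp_of_nonneg (μ := μ)
    (measurable_const.mul hYt).exp.stronglyMeasurable
    (fun ω => (Real.exp_pos (h * Y t ω)).le) (integrable_exp_mul_of_ae_le hΔ hh0.le (hbdd t))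
    (ae_of_all _ fun ω => (Real.exp_pos _).le)
  filter_upwards [hpull, hdrift t, condExp_exp_mul_le_exp_mul (ℱ.le t) hΔ hh0.le (hbdd t),
    condExp_exp_mul_le_one_add_sq_add_mul_condExp_truncation (ℱ.le t) hΔ hh0.le hhb (hbdd t)]
    with ω hω_pull hω_drift hω_exp hω_quad
  rw [hsplit]
  have hpos := (Real.exp_pos (h * Y t ω)).le
  refine ⟨fun hC => hω_pull.trans ?_, fun _ => hω_pull.trans ?_⟩
  · have hsq : (h * b) ^ 2 < h * ε / 2 := by nlinarith
    rw [mul_comm (1 - h * ε / 2)]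
    exact mul_le_mul_of_nonneg_left (by nlinarith [hω_drift hC]) hpos
  · rw [mul_add, Real.exp_add]
    exact mul_le_mul_of_nonneg_left hω_exp hpos

theorem exp_drift_bound {Ω : Type*} {m0 : MeasurableSpace Ω} {μ : Measure Ω}
    [IsProbabilityMeasure μ] (ℱ : Filtration ℕ m0) (Y : ℕ → Ω → ℝ)
    (hadapt : Adapted ℱ Y) (hY0 : ∀ t ω, 0 ≤ Y t ω)
    (C b ε : ℝ) (hC : 0 < C) (hb : 0 < b) (hε : 0 < ε)
    (hbdd : ∀ t, ∀ᵐ ω ∂μ, Y (t + 1) ω - Y t ω ≤ b)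
    (hdrift : ∀ t, ∀ᵐ ω ∂μ, C ≤ Y t ω →
      (μ[fun ω' => (Y (t + 1) ω' - Y t ω') *
          (if -b ≤ Y (t + 1) ω' - Y t ω' then 1 else 0) | ℱ t]) ω ≤ -ε)
    (h : ℝ) (hh0 : 0 < h) (hh1 : h < 1 / b) (hh2 : h * b ^ 2 < ε / 2) :
    ∀ t, ∀ᵐ ω ∂μ,
      (C ≤ Y t ω →
        (μ[fun ω' => Real.exp (h * Y (t + 1) ω') | ℱ t]) ω ≤
          (1 - h * ε / 2) * Real.exp (h * Y t ω)) ∧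
      (Y t ω < C →
        (μ[fun ω' => Real.exp (h * Y (t + 1) ω') | ℱ t]) ω ≤
          Real.exp (h * (Y t ω + b))) :=
  exp_drift_bound_general ℱ Y hadapt C b ε hb hbdd hdrift h hh0 hh1 hh2
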